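/- arXiv:2104.04513 — 6 statements merged into one kernel-verified Lean document; each statement's English description precedes it below -/
import Mathlib

section
/- For fillings θ₁, θ₂ ∈ (0,1) and integer n ≥ 1, every complex solution μ of the cubic λ³ = ((1-θ₁)ⁿ λ + θ₁ⁿ)((1-θ₂)ⁿ λ + θ₂ⁿ) other than the unique positive real root λₙ satisfies |μ| < λₙ, i.e., the positive real root is the strictly dominant root. -/
/-!
Writing the cubic as `x³ = A x² + B x + C` with `A, B, C > 0`, the triangle inequality gives
`‖μ‖³ ≤ A ‖μ‖² + B ‖μ‖ + C` for every root `μ`. Since `A/x + B/x² + C/x³` is strictly decreasing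
on `x > 0` and equals `1` at the positive root `l`, this forces `‖μ‖ ≤ l`. If `‖μ‖ = l`, the
triangle inequality `‖B μ + C‖ ≤ B ‖μ‖ + C` must be an equality, so `B μ` lies on the ray of the
positive real `C`; then `μ` is a nonnegative real of modulus `l`, i.e. `μ = l`.
-/

lemma Complex.eq_norm_of_norm_add_ofReal_eq {C : ℝ} (hC : 0 < C) {z : ℂ}
    (h : ‖z + C‖ = ‖z‖ + C) : z = ‖z‖ := by
  have hCnorm : ‖(C : ℂ)‖ = C := by simp [hC.le]
  have hray := norm_add_eq_iff_real.mp (h.trans (by rw [hCnorm]))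
  rw [hCnorm] at hray
  have hmul : (C : ℂ) * z = C * ‖z‖ := by simpa [Complex.real_smul, mul_comm] using hray
  exact mul_left_cancel₀ (by exact_mod_cast hC.ne') hmul

lemma cubic_lt_cube_of_lt {A B C l t : ℝ} (hA : 0 ≤ A) (hB : 0 ≤ B) (hC : 0 < C) (hl : 0 < l)
    (hlroot : l ^ 3 = A * l ^ 2 + B * l + C) (hlt : l < t) :
    A * t ^ 2 + B * t + C < t ^ 3 := by
  have ht : 0 < t := hl.trans hlt
  suffices (A * t ^ 2 + B * t + C) * l ^ 3 < t ^ 3 * l ^ 3 from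
    lt_of_mul_lt_mul_right this (by positivity)
  -- Substituting `l³ = A l² + B l + C`, the difference `t³ l³ - (A t² + B t + C) l³` is `h1 + h2 + h3`.
  have h1 : 0 ≤ A * l ^ 2 * t ^ 2 * (t - l) := mul_nonneg (by positivity) (by linarith)
  have h2 : 0 ≤ B * l * t * (t ^ 2 - l ^ 2) := mul_nonneg (by positivity) (by nlinarith)
  have h3 : 0 < C * (t ^ 3 - l ^ 3) := mul_pos hC (by nlinarith [mul_pos ht hl])
  linear_combination (-(t ^ 3)) * hlroot + h1 + h2 + h3

theorem Complex.norm_lt_of_cubic_root {A B C l : ℝ} (hA : 0 ≤ A) (hB : 0 < B) (hC : 0 < C)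
    (hl : 0 < l) (hlroot : l ^ 3 = A * l ^ 2 + B * l + C) {μ : ℂ}
    (hμ : μ ^ 3 = A * μ ^ 2 + B * μ + C) (hne : μ ≠ l) : ‖μ‖ < l := by
  have hnormBμ : ‖(B * μ : ℂ)‖ = B * ‖μ‖ := by simp [hB.le]
  have hcube : ‖μ‖ ^ 3 ≤ A * ‖μ‖ ^ 2 + ‖(B * μ + C : ℂ)‖ :=
    calc ‖μ‖ ^ 3 = ‖(A * μ ^ 2 + (B * μ + C) : ℂ)‖ := by rw [← norm_pow, hμ, add_assoc]
      _ ≤ ‖(A * μ ^ 2 : ℂ)‖ + ‖(B * μ + C : ℂ)‖ := norm_add_le _ _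
      _ = A * ‖μ‖ ^ 2 + ‖(B * μ + C : ℂ)‖ := by simp [hA]
  have hlin : ‖(B * μ + C : ℂ)‖ ≤ B * ‖μ‖ + C :=
    (norm_add_le _ _).trans_eq (by rw [hnormBμ, Complex.norm_real, Real.norm_of_nonneg hC.le])
  have hle : ‖μ‖ ≤ l := le_of_not_gt fun hlt =>
    (cubic_lt_cube_of_lt hA hB.le hC hl hlroot hlt).not_ge (by linarith)
  refine hle.lt_of_ne fun heq => hne ?_
  rw [heq] at hcube hlin hnormBμ
  have htri : ‖(B * μ + C : ℂ)‖ = ‖(B * μ : ℂ)‖ + C := by rw [hnormBμ]; linarith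
  have hreal := Complex.eq_norm_of_norm_add_ofReal_eq hC htri
  rw [hnormBμ, Complex.ofReal_mul] at hreal
  exact mul_left_cancel₀ (by exact_mod_cast hB.ne') hreal

theorem stmt1_general (θ₁ θ₂ : ℝ) (hθ₁ : θ₁ ∈ Set.Ioo (0:ℝ) 1) (hθ₂ : θ₂ ∈ Set.Ioo (0:ℝ) 1)
    (n : ℕ)
    (l : ℝ) (hlpos : 0 < l)
    (hl : l ^ 3 = ((1 - θ₁) ^ n * l + θ₁ ^ n) * ((1 - θ₂) ^ n * l + θ₂ ^ n))
    (μ : ℂ)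
    (hμ : μ ^ 3 = ((1 - (θ₁:ℂ)) ^ n * μ + (θ₁:ℂ) ^ n) * ((1 - (θ₂:ℂ)) ^ n * μ + (θ₂:ℂ) ^ n))
    (hne : μ ≠ (l : ℂ)) :
    ‖μ‖ < l := by
  obtain ⟨hθ₁0, hθ₁1⟩ := hθ₁
  obtain ⟨hθ₂0, hθ₂1⟩ := hθ₂
  have hb : 0 < (1 - θ₁) ^ n := pow_pos (by linarith) n
  have hc : 0 < θ₁ ^ n := pow_pos hθ₁0 n
  have hd : 0 < (1 - θ₂) ^ n := pow_pos (by linarith) n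
  have he : 0 < θ₂ ^ n := pow_pos hθ₂0 n
  refine Complex.norm_lt_of_cubic_root (A := (1 - θ₁) ^ n * (1 - θ₂) ^ n)
    (B := (1 - θ₁) ^ n * θ₂ ^ n + θ₁ ^ n * (1 - θ₂) ^ n) (C := θ₁ ^ n * θ₂ ^ n)
    (by positivity) (by positivity) (by positivity) hlpos (by rw [hl]; ring) ?_ hne
  rw [hμ]
  push_cast
  ring

/-- Every complex root of the cubic other than the unique positive real root λₙ
has modulus strictly smaller than λₙ. -/
theorem stmt1 (θ₁ θ₂ : ℝ) (hθ₁ : θ₁ ∈ Set.Ioo (0:ℝ) 1) (hθ₂ : θ₂ ∈ Set.Ioo (0:ℝ) 1)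
    (n : ℕ) (hn : 1 ≤ n)
    (l : ℝ) (hlpos : 0 < l)
    (hl : l ^ 3 = ((1 - θ₁) ^ n * l + θ₁ ^ n) * ((1 - θ₂) ^ n * l + θ₂ ^ n))
    (μ : ℂ)
    (hμ : μ ^ 3 = ((1 - (θ₁:ℂ)) ^ n * μ + (θ₁:ℂ) ^ n) * ((1 - (θ₂:ℂ)) ^ n * μ + (θ₂:ℂ) ^ n))
    (hne : μ ≠ (l : ℂ)) :
    ‖μ‖ < l :=
  stmt1_general θ₁ θ₂ hθ₁ hθ₂ n l hlpos hl μ hμ hne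
end

section
/- For n a positive integer and θ₁, θ₂ ∈ (0,1), the 3×3 matrix (1-θ₁)ⁿ(1-θ₂)ⁿ · [[1+e^{-n(μ₁+μ₂)}, e^{-nμ₁}, e^{-nμ₂}], [1+e^{-nμ₂}, e^{-n(μ₁+μ₂)}, e^{-nμ₂}], [1+e^{-nμ₁}, e^{-nμ₁}, e^{-n(μ₁+μ₂)}]], where e^{-μ₁} = θ₁(1-θ₂)/(1-θ₁)² and e^{-μ₂} = θ₂(1-θ₁)/(1-θ₂)², has spectral radius Λₙ(θ₁,θ₂) = (1-θ₁)ⁿ(1-θ₂)ⁿ / ((1-θ₁⁽ⁿ⁾)(1-θ₂⁽ⁿ⁾)), where θ₁⁽ⁿ⁾, θ₂⁽ⁿ⁾ ∈ (0,1) are defined by θᵢ⁽ⁿ⁾(1-θ_{3-i}⁽ⁿ⁾)/(1-θᵢ⁽ⁿ⁾)² = (θᵢ(1-θ_{3-i})/(1-θᵢ)²)ⁿ for i = 1,2. -/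
/-!
Put `u = θ₁⁽ⁿ⁾`, `v = θ₂⁽ⁿ⁾`, `d = (1 - u)(1 - v)`, so that `M = (Λ d) • rule54Matrix a b` with
`a = e^{-nμ₁}`, `b = e^{-nμ₂}` the fugacities of `(u, v)`. Since `a b d = u v`, the characteristic
polynomial of `M` factors as `(μ - Λ)(μ² + Λ β μ + Λ² γ)` with `β = 1 - d - 3uv` and
`γ = uv(1 - u - v)²`. The quadratic factor satisfies the Schur–Cohn conditions `γ ≤ 1`,
`|β| ≤ 1 + γ`, so its roots lie in the closed disc of radius `Λ`.
-/

lemma Complex.norm_le_one_of_sq_add_mul_add_eq_zero {β γ : ℝ} (hγ : γ ≤ 1) (hβ : |β| ≤ 1 + γ)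
    {x : ℂ} (hx : x ^ 2 + β * x + γ = 0) : ‖x‖ ≤ 1 := by
  have hre := congrArg Complex.re hx
  have him := congrArg Complex.im hx
  simp only [pow_two, Complex.add_re, Complex.add_im, Complex.mul_re, Complex.mul_im,
    Complex.ofReal_re, Complex.ofReal_im, Complex.zero_re, Complex.zero_im] at hre him
  obtain ⟨hβl, hβu⟩ := abs_le.mp hβ
  suffices x.re ^ 2 + x.im ^ 2 ≤ 1 by
    rw [← sq_le_one_iff₀ (norm_nonneg x), Complex.sq_norm, Complex.normSq_apply]; nlinarith
  rcases mul_eq_zero.mp (show x.im * (2 * x.re + β) = 0 by linarith) with him0 | hβ_re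
  · -- for real ξ, ξ ^ 2 + β * ξ + γ ≥ (|ξ| - 1) * (|ξ| - γ), which is positive when |ξ| > 1
    rw [him0] at hre ⊢
    have : x.re ≤ 1 := by
      by_contra! h; nlinarith [mul_pos (sub_pos.mpr h) (by linarith : (0:ℝ) < x.re - γ)]
    have : -1 ≤ x.re := by
      by_contra! h
      nlinarith [mul_pos (by linarith : (0:ℝ) < -1 - x.re) (by linarith : (0:ℝ) < -x.re - γ)]
    nlinarith
  · -- a pair of conjugate roots, whose product is γ
    have : β = -2 * x.re := by linarith
    subst this; nlinarith

lemma Complex.norm_le_of_sq_add_mul_add_eq_zero {β γ s : ℝ} (hs : 0 < s) (hγ : γ ≤ 1)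
    (hβ : |β| ≤ 1 + γ) {μ : ℂ} (hμ : μ ^ 2 + (s * β : ℝ) * μ + (s ^ 2 * γ : ℝ) = 0) : ‖μ‖ ≤ s := by
  have hs' : (s : ℂ) ≠ 0 := by exact_mod_cast hs.ne'
  have := norm_le_one_of_sq_add_mul_add_eq_zero hγ hβ (x := μ / s) (by
    field_simp; push_cast at hμ; linear_combination hμ)
  rwa [norm_div, Complex.norm_real, Real.norm_of_nonneg hs.le, div_le_one hs] at this

def rule54Matrix (a b : ℝ) : Matrix (Fin 3) (Fin 3) ℂ :=
  !![((1 + a * b : ℝ) : ℂ), ((a : ℝ) : ℂ), ((b : ℝ) : ℂ);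
     ((1 + b : ℝ) : ℂ), ((a * b : ℝ) : ℂ), ((b : ℝ) : ℂ);
     ((1 + a : ℝ) : ℂ), ((a : ℝ) : ℂ), ((a * b : ℝ) : ℂ)]

/-- `e^{-μ₁}` as a function of the fillings `(θ₁, θ₂) = (u, v)`; `e^{-μ₂}` is `rule54Fugacity v u`. -/
noncomputable def rule54Fugacity (u v : ℝ) : ℝ := u * (1 - v) / (1 - u) ^ 2

lemma det_algebraMap_sub_smul_rule54Matrix (a b c : ℝ) (μ : ℂ) :
    (algebraMap ℂ _ μ - (c : ℂ) • rule54Matrix a b).det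
      = μ ^ 3 - (1 + 3 * a * b) * c * μ ^ 2 + (3 * (a * b) ^ 2 - a - b - a * b) * c ^ 2 * μ
        - a * b * (1 - a * b) ^ 2 * c ^ 3 := by
  simp only [rule54Matrix, Complex.ofReal_add, Complex.ofReal_one, Complex.ofReal_mul,
    Matrix.smul_of, Matrix.smul_cons, smul_eq_mul, Matrix.smul_empty, Matrix.det_fin_three,
    Matrix.sub_apply, Matrix.algebraMap_matrix_apply, ↓reduceIte, Algebra.algebraMap_self,
    RingHom.id_apply, Matrix.of_apply, Matrix.cons_val', Matrix.cons_val_zero,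
    Matrix.cons_val_fin_one, Matrix.cons_val_one, Matrix.cons_val, Fin.reduceEq, zero_sub,
    mul_neg, neg_mul, neg_neg, zero_ne_one, one_ne_zero]
  ring

lemma det_algebraMap_sub_smul_rule54Matrix_fugacity_eq_mul {u v : ℝ} (hu : u ≠ 1) (hv : v ≠ 1)
    (Λ : ℝ) (μ : ℂ) :
    (algebraMap ℂ _ μ - ((Λ * ((1 - u) * (1 - v)) : ℝ) : ℂ) •
        rule54Matrix (rule54Fugacity u v) (rule54Fugacity v u)).det
      = (μ - Λ) * (μ ^ 2 + (Λ * (1 - (1 - u) * (1 - v) - 3 * u * v) : ℝ) * μ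
        + (Λ ^ 2 * (u * v * (1 - u - v) ^ 2) : ℝ)) := by
  have hu' : (1 : ℂ) - u ≠ 0 := by exact_mod_cast sub_ne_zero.mpr hu.symm
  have hv' : (1 : ℂ) - v ≠ 0 := by exact_mod_cast sub_ne_zero.mpr hv.symm
  rw [det_algebraMap_sub_smul_rule54Matrix]
  simp only [rule54Fugacity]
  push_cast
  field_simp
  ring

lemma Matrix.mem_spectrum_iff_det_eq_zero {ι K : Type*} [Fintype ι] [DecidableEq ι] [Field K]
    (A : Matrix ι ι K) (μ : K) : μ ∈ spectrum K A ↔ (algebraMap K _ μ - A).det = 0 := by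
  rw [spectrum.mem_iff, Matrix.isUnit_iff_isUnit_det, isUnit_iff_ne_zero, not_not]

lemma mul_mul_one_sub_sub_sq_le_one {u v : ℝ} (hu : u ∈ Set.Ioo (0:ℝ) 1)
    (hv : v ∈ Set.Ioo (0:ℝ) 1) : u * v * (1 - u - v) ^ 2 ≤ 1 := by
  obtain ⟨hu0, hu1⟩ := hu; obtain ⟨hv0, hv1⟩ := hv
  refine mul_le_one₀ (mul_le_one₀ hu1.le hv0.le hv1.le) (sq_nonneg _) ?_
  rw [sq_le_one_iff_abs_le_one, abs_le]
  constructor <;> linarith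

lemma mul_mul_three_sub_sub_le_one {u v : ℝ} (hu : 0 ≤ u) (hv : 0 ≤ v) (huv : u + v ≤ 3) :
    u * v * (3 - u - v) ≤ 1 := by
  -- AM-GM for u, v and 3 - u - v
  nlinarith [mul_nonneg (by linarith : (0:ℝ) ≤ 3 - u - v) (sq_nonneg (u - v)),
    mul_nonneg (by linarith : (0:ℝ) ≤ u + v + 1) (sq_nonneg (u + v - 2))]

lemma abs_one_sub_mul_sub_le {u v : ℝ} (hu : u ∈ Set.Ioo (0:ℝ) 1) (hv : v ∈ Set.Ioo (0:ℝ) 1) :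
    |1 - (1 - u) * (1 - v) - 3 * u * v| ≤ 1 + u * v * (1 - u - v) ^ 2 := by
  obtain ⟨hu0, hu1⟩ := hu; obtain ⟨hv0, hv1⟩ := hv
  rw [abs_le]
  constructor
  · have key : 0 ≤ (1 + u + v) * (1 - u * v * (3 - u - v)) :=
      mul_nonneg (by linarith)
        (sub_nonneg.mpr (mul_mul_three_sub_sub_le_one hu0.le hv0.le (by linarith)))
    -- 2 + u v (1 - u - v)² - (1 - u)(1 - v) - 3 u v factors as this product
    linear_combination key
  · linarith [mul_pos (sub_pos.mpr hu1) (sub_pos.mpr hv1), mul_pos hu0 hv0,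
      mul_nonneg (mul_pos hu0 hv0).le (sq_nonneg (1 - u - v))]

lemma rule54Matrix_spectrum {u v Λ : ℝ} (hu : u ∈ Set.Ioo (0:ℝ) 1)
    (hv : v ∈ Set.Ioo (0:ℝ) 1) (hΛ : 0 < Λ) {M : Matrix (Fin 3) (Fin 3) ℂ}
    (hM : M = ((Λ * ((1 - u) * (1 - v)) : ℝ) : ℂ) •
      rule54Matrix (rule54Fugacity u v) (rule54Fugacity v u)) :
    (Λ : ℂ) ∈ spectrum ℂ M ∧ ∀ μ ∈ spectrum ℂ M, ‖μ‖ ≤ Λ := by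
  have hdet := det_algebraMap_sub_smul_rule54Matrix_fugacity_eq_mul hu.2.ne hv.2.ne Λ
  simp only [hM, Matrix.mem_spectrum_iff_det_eq_zero, hdet]
  refine ⟨by simp, fun μ hμ => ?_⟩
  rcases mul_eq_zero.mp hμ with hμΛ | hμ
  · rw [sub_eq_zero.mp hμΛ, Complex.norm_real, Real.norm_of_nonneg hΛ.le]
  · exact Complex.norm_le_of_sq_add_mul_add_eq_zero hΛ (mul_mul_one_sub_sub_sq_le_one hu hv)
      (abs_one_sub_mul_sub_le hu hv) hμ

theorem stmt6_general (θ₁ θ₂ : ℝ) (hθ₁ : θ₁ ∈ Set.Ioo (0:ℝ) 1) (hθ₂ : θ₂ ∈ Set.Ioo (0:ℝ) 1)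
    (n : ℕ)
    (e₁ e₂ : ℝ)
    (θ₁' θ₂' : ℝ) (hθ₁' : θ₁' ∈ Set.Ioo (0:ℝ) 1) (hθ₂' : θ₂' ∈ Set.Ioo (0:ℝ) 1)
    (h₁' : θ₁' * (1 - θ₂') / (1 - θ₁') ^ 2 = e₁ ^ n)
    (h₂' : θ₂' * (1 - θ₁') / (1 - θ₂') ^ 2 = e₂ ^ n)
    (Λ : ℝ)
    (hΛ : Λ = (1 - θ₁) ^ n * (1 - θ₂) ^ n / ((1 - θ₁') * (1 - θ₂')))
    (M : Matrix (Fin 3) (Fin 3) ℂ)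
    (hM : M = (((1 - θ₁) ^ n * (1 - θ₂) ^ n : ℝ) : ℂ) •
      !![((1 + e₁ ^ n * e₂ ^ n : ℝ) : ℂ), ((e₁ ^ n : ℝ) : ℂ), ((e₂ ^ n : ℝ) : ℂ);
         ((1 + e₂ ^ n : ℝ) : ℂ), ((e₁ ^ n * e₂ ^ n : ℝ) : ℂ), ((e₂ ^ n : ℝ) : ℂ);
         ((1 + e₁ ^ n : ℝ) : ℂ), ((e₁ ^ n : ℝ) : ℂ), ((e₁ ^ n * e₂ ^ n : ℝ) : ℂ)]) :
    (Λ : ℂ) ∈ spectrum ℂ M ∧ ∀ μ ∈ spectrum ℂ M, ‖μ‖ ≤ Λ := by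
  have hd : 0 < (1 - θ₁') * (1 - θ₂') := mul_pos (sub_pos.mpr hθ₁'.2) (sub_pos.mpr hθ₂'.2)
  have hΛpos : 0 < Λ := by
    rw [hΛ]
    exact div_pos (mul_pos (pow_pos (sub_pos.mpr hθ₁.2) n) (pow_pos (sub_pos.mpr hθ₂.2) n)) hd
  refine rule54Matrix_spectrum hθ₁' hθ₂' hΛpos ?_
  rw [hM, hΛ, div_mul_cancel₀ _ hd.ne', rule54Fugacity, rule54Fugacity, h₁', h₂']
  rfl

/-- The 3×3 stationary transfer matrix of Rule 54 has spectral radius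
Λₙ(θ₁,θ₂) = (1-θ₁)ⁿ(1-θ₂)ⁿ/((1-θ₁⁽ⁿ⁾)(1-θ₂⁽ⁿ⁾)): Λₙ is an eigenvalue and every
eigenvalue has modulus at most Λₙ. -/
theorem stmt6 (θ₁ θ₂ : ℝ) (hθ₁ : θ₁ ∈ Set.Ioo (0:ℝ) 1) (hθ₂ : θ₂ ∈ Set.Ioo (0:ℝ) 1)
    (n : ℕ) (hn : 1 ≤ n)
    (e₁ e₂ : ℝ)
    (he₁ : e₁ = θ₁ * (1 - θ₂) / (1 - θ₁) ^ 2)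
    (he₂ : e₂ = θ₂ * (1 - θ₁) / (1 - θ₂) ^ 2)
    (θ₁' θ₂' : ℝ) (hθ₁' : θ₁' ∈ Set.Ioo (0:ℝ) 1) (hθ₂' : θ₂' ∈ Set.Ioo (0:ℝ) 1)
    (h₁' : θ₁' * (1 - θ₂') / (1 - θ₁') ^ 2 = e₁ ^ n)
    (h₂' : θ₂' * (1 - θ₁') / (1 - θ₂') ^ 2 = e₂ ^ n)
    (Λ : ℝ)
    (hΛ : Λ = (1 - θ₁) ^ n * (1 - θ₂) ^ n / ((1 - θ₁') * (1 - θ₂')))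
    (M : Matrix (Fin 3) (Fin 3) ℂ)
    (hM : M = (((1 - θ₁) ^ n * (1 - θ₂) ^ n : ℝ) : ℂ) •
      !![((1 + e₁ ^ n * e₂ ^ n : ℝ) : ℂ), ((e₁ ^ n : ℝ) : ℂ), ((e₂ ^ n : ℝ) : ℂ);
         ((1 + e₂ ^ n : ℝ) : ℂ), ((e₁ ^ n * e₂ ^ n : ℝ) : ℂ), ((e₂ ^ n : ℝ) : ℂ);
         ((1 + e₁ ^ n : ℝ) : ℂ), ((e₁ ^ n : ℝ) : ℂ), ((e₁ ^ n * e₂ ^ n : ℝ) : ℂ)]) :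
    (Λ : ℂ) ∈ spectrum ℂ M ∧ ∀ μ ∈ spectrum ℂ M, ‖μ‖ ≤ Λ :=
  stmt6_general θ₁ θ₂ hθ₁ hθ₂ n e₁ e₂ θ₁' θ₂' hθ₁' hθ₂' h₁' h₂' Λ hΛ M hM
end

section
/- For θ₁, θ₂ ∈ (0,1), expanding the dominant root λ_{1+δ}(θ₁,θ₂) of the cubic λ³ = ((1-θ₁)^{1+δ}λ + θ₁^{1+δ})((1-θ₂)^{1+δ}λ + θ₂^{1+δ}) around δ = 0 gives λ_{1+δ} = 1 + δ/(1+θ₁+θ₂) · Σ_{j=1,2} (θ_j log θ_j + (1-θ_j) log(1-θ_j)) + O(δ²). In particular λ₁(θ₁,θ₂) = 1 and the derivative of z ↦ λ_z(θ₁,θ₂) at z = 1 equals (Σ_j θ_j log θ_j + (1-θ_j)log(1-θ_j))/(1+θ₁+θ₂). -/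
/-!
At `z = 1` the cubic factors as `(λ - 1) (λ² + (θ₁ + θ₂ - θ₁θ₂) λ + θ₁θ₂)`, whose second factor is
positive for `λ > 0`, so `λ₁ = 1`. Differentiating the identity
`λ_z³ = ((1-θ₁)^z λ_z + θ₁^z) ((1-θ₂)^z λ_z + θ₂^z)` at `z = 1` and using that both factors equal
`1` there gives `3 λ' = Σ_j (θ_j log θ_j + (1-θ_j) log (1-θ_j) + (1-θ_j) λ')`, which is linear in `λ'`.
-/

open Filter Topology

lemma eq_one_of_pow_three_eq_mul {a b x : ℝ} (ha₀ : 0 ≤ a) (ha₁ : a ≤ 1) (hb : 0 ≤ b)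
    (hx : 0 < x) (h : x ^ 3 = ((1 - a) * x + a) * ((1 - b) * x + b)) : x = 1 := by
  have hfactor : (x - 1) * (x ^ 2 + (a + b * (1 - a)) * x + a * b) = 0 := by
    linear_combination h
  have hpos : 0 < x ^ 2 + (a + b * (1 - a)) * x + a * b := by
    have : 0 ≤ a + b * (1 - a) := by nlinarith
    positivity
  linarith [(mul_eq_zero.mp hfactor).resolve_right hpos.ne']

lemma hasDerivAt_rpow_mul_add_rpow {f : ℝ → ℝ} {f' p q x : ℝ} (hp : 0 < p) (hq : 0 < q)
    (hf : HasDerivAt f f' x) :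
    HasDerivAt (fun z => p ^ z * f z + q ^ z)
      (p ^ x * Real.log p * f x + p ^ x * f' + q ^ x * Real.log q) x :=
  (((Real.hasStrictDerivAt_const_rpow hp x).hasDerivAt.mul hf).add
    (Real.hasStrictDerivAt_const_rpow hq x).hasDerivAt)

/-- The positive root λ_z of the continued cubic satisfies λ₁ = 1 and its derivative
at z = 1 equals (Σ_j θ_j log θ_j + (1-θ_j) log(1-θ_j))/(1+θ₁+θ₂). -/
theorem stmt10 (θ₁ θ₂ : ℝ) (hθ₁ : θ₁ ∈ Set.Ioo (0:ℝ) 1) (hθ₂ : θ₂ ∈ Set.Ioo (0:ℝ) 1)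
    (lam : ℝ → ℝ) (d : ℝ)
    (hroot : ∀ z : ℝ, 0 < z → 0 < lam z ∧
      (lam z) ^ 3 = ((1 - θ₁) ^ z * lam z + θ₁ ^ z) * ((1 - θ₂) ^ z * lam z + θ₂ ^ z))
    (hd : HasDerivAt lam d 1) :
    lam 1 = 1 ∧
      d = (θ₁ * Real.log θ₁ + (1 - θ₁) * Real.log (1 - θ₁)
          + θ₂ * Real.log θ₂ + (1 - θ₂) * Real.log (1 - θ₂)) / (1 + θ₁ + θ₂) := by
  obtain ⟨hθ₁₀, hθ₁₁⟩ := hθ₁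
  obtain ⟨hθ₂₀, hθ₂₁⟩ := hθ₂
  have hlam₁ : lam 1 = 1 := by
    obtain ⟨hpos, heq⟩ := hroot 1 one_pos
    simp only [Real.rpow_one] at heq
    exact eq_one_of_pow_three_eq_mul hθ₁₀.le hθ₁₁.le hθ₂₀.le hpos heq
  refine ⟨hlam₁, ?_⟩
  have hcubic : (fun z => lam z ^ 3) =ᶠ[𝓝 1]
      fun z => ((1 - θ₁) ^ z * lam z + θ₁ ^ z) * ((1 - θ₂) ^ z * lam z + θ₂ ^ z) := by
    filter_upwards [eventually_gt_nhds one_pos] with z hz using (hroot z hz).2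
  have hfactor₁ := hasDerivAt_rpow_mul_add_rpow (sub_pos.2 hθ₁₁) hθ₁₀ hd
  have hfactor₂ := hasDerivAt_rpow_mul_add_rpow (sub_pos.2 hθ₂₁) hθ₂₀ hd
  have hderiv := (hd.pow 3).unique ((hfactor₁.mul hfactor₂).congr_of_eventuallyEq hcubic)
  simp only [hlam₁, Real.rpow_one] at hderiv
  field_simp
  linear_combination hderiv
end

section
/- For n → ∞ and θ₁, θ₂ ∈ (0,1), the min-entropy slope r_∞(θ₁,θ₂) = lim_{n→∞} (1/(1-n)) log λₙ(θ₁,θ₂) equals -log[(1-θ₁)(1-θ₂)] whenever θ₁/(1-θ₁) ≤ (1-θ₁)(1-θ₂) and θ₂/(1-θ₂) ≤ (1-θ₁)(1-θ₂). -/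
/-!
Write `c = (1-θ₁)(1-θ₂)`. Dropping the `θᵢⁿ` terms in the cubic gives `λₙ ≥ cⁿ`; conversely the
hypotheses say `θᵢ ≤ (1-θᵢ) c`, so `θᵢⁿ ≤ (1-θᵢ)ⁿ cⁿ ≤ (1-θᵢ)ⁿ λₙ`, each factor of the cubic is at most
twice its leading term, and `λₙ ≤ 4 cⁿ`. Hence `log λₙ = n log c + O(1)`, and dividing by `1 - n`
gives the limit `-log c`.
-/

open Filter Topology Real Asymptotics

lemma tendsto_one_div_one_sub_natCast_atTop :
    Tendsto (fun n : ℕ => 1 / (1 - (n : ℝ))) atTop (𝓝 0) := by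
  have h := (tendsto_atTop_add_const_right atTop (-1 : ℝ)
    tendsto_natCast_atTop_atTop).inv_tendsto_atTop.neg
  rw [neg_zero] at h
  refine h.congr fun n => ?_
  rw [one_div, ← neg_sub, inv_neg, sub_eq_add_neg]
  rfl

lemma tendsto_natCast_div_one_sub_natCast_atTop :
    Tendsto (fun n : ℕ => (n : ℝ) / (1 - n)) atTop (𝓝 (-1)) := by
  refine (tendsto_natCast_div_add_atTop (-1 : ℝ)).neg.congr fun n => ?_
  rw [← neg_sub (n : ℝ) 1, div_neg, sub_eq_add_neg]

lemma tendsto_one_div_one_sub_mul_of_isBigO {f : ℕ → ℝ} {L : ℝ}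
    (hf : (fun n : ℕ => f n - n * L) =O[atTop] (fun _ => (1 : ℝ))) :
    Tendsto (fun n : ℕ => 1 / (1 - (n : ℝ)) * f n) atTop (𝓝 (-L)) := by
  have herr : Tendsto (fun n : ℕ => 1 / (1 - (n : ℝ)) * (f n - n * L)) atTop (𝓝 0) :=
    ((isBigO_refl _ _).mul hf).trans_tendsto (by simpa using tendsto_one_div_one_sub_natCast_atTop)
  have h := (tendsto_natCast_div_one_sub_natCast_atTop.mul_const L).add herr
  rw [neg_one_mul, add_zero] at h
  exact h.congr fun n => by ring

lemma isBigO_log_sub_natCast_mul_log {x : ℕ → ℝ} {c K : ℝ} (hc : 0 < c)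
    (hx : ∀ᶠ n in atTop, c ^ n ≤ x n ∧ x n ≤ K * c ^ n) :
    (fun n : ℕ => log (x n) - n * log c) =O[atTop] (fun _ => (1 : ℝ)) := by
  refine IsBigO.of_bound (log K) ?_
  filter_upwards [hx] with n ⟨hlow, hup⟩
  have hcn : 0 < c ^ n := pow_pos hc n
  have hK : 0 < K := pos_of_mul_pos_left (hcn.trans_le (hlow.trans hup)) hcn.le
  have h1 : n * log c ≤ log (x n) := by
    rw [← log_pow]; exact log_le_log hcn hlow
  have h2 : log (x n) ≤ log K + n * log c := by
    rw [← log_pow, ← log_mul hK.ne' hcn.ne']; exact log_le_log (hcn.trans_le hlow) hup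
  rw [norm_one, mul_one, Real.norm_eq_abs, abs_le]
  constructor <;> linarith [log_nonneg (show 1 ≤ K by nlinarith)]

lemma mul_le_of_pow_three_eq {x p q s t : ℝ} (hx : 0 < x) (hp : 0 ≤ p) (hq : 0 ≤ q)
    (hs : 0 ≤ s) (ht : 0 ≤ t) (h : x ^ 3 = (p * x + s) * (q * x + t)) : p * q ≤ x := by
  refine le_of_mul_le_mul_right ?_ (pow_pos hx 2)
  have : p * x * (q * x) ≤ (p * x + s) * (q * x + t) :=
    mul_le_mul (le_add_of_nonneg_right hs) (le_add_of_nonneg_right ht) (by positivity) (by positivity)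
  linear_combination this - h

lemma le_four_mul_of_pow_three_eq {x p q s t : ℝ} (hx : 0 < x) (hs : 0 ≤ s) (ht : 0 ≤ t)
    (hsp : s ≤ p * x) (htq : t ≤ q * x) (h : x ^ 3 = (p * x + s) * (q * x + t)) :
    x ≤ 4 * p * q := by
  refine le_of_mul_le_mul_right ?_ (pow_pos hx 2)
  have : (p * x + s) * (q * x + t) ≤ (2 * (p * x)) * (2 * (q * x)) :=
    mul_le_mul (by linarith) (by linarith) (by linarith) (by linarith)
  linear_combination this + h

lemma pow_le_one_sub_pow_mul {θ c x : ℝ} (n : ℕ) (hθ : 0 ≤ θ) (hθ1 : θ < 1)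
    (h : θ / (1 - θ) ≤ c) (hx : c ^ n ≤ x) : θ ^ n ≤ (1 - θ) ^ n * x := by
  have hθc : θ ≤ (1 - θ) * c := by
    rw [div_le_iff₀ (sub_pos.2 hθ1)] at h; linarith
  calc θ ^ n ≤ ((1 - θ) * c) ^ n := pow_le_pow_left₀ hθ hθc n
    _ = (1 - θ) ^ n * c ^ n := mul_pow _ _ _
    _ ≤ (1 - θ) ^ n * x := mul_le_mul_of_nonneg_left hx (pow_nonneg (by linarith) n)

/-- Min-entropy slope: in the regime θᵢ/(1-θᵢ) ≤ (1-θ₁)(1-θ₂) the slope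
(1/(1-n)) log λₙ tends to -log((1-θ₁)(1-θ₂)) as n → ∞. -/
theorem stmt12 (θ₁ θ₂ : ℝ) (hθ₁ : θ₁ ∈ Set.Ioo (0:ℝ) 1) (hθ₂ : θ₂ ∈ Set.Ioo (0:ℝ) 1)
    (h1 : θ₁ / (1 - θ₁) ≤ (1 - θ₁) * (1 - θ₂))
    (h2 : θ₂ / (1 - θ₂) ≤ (1 - θ₁) * (1 - θ₂))
    (lam : ℕ → ℝ)
    (hlam : ∀ n : ℕ, 1 ≤ n → 0 < lam n ∧
      (lam n) ^ 3 = ((1 - θ₁) ^ n * lam n + θ₁ ^ n) * ((1 - θ₂) ^ n * lam n + θ₂ ^ n)) :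
    Filter.Tendsto (fun n : ℕ => 1 / (1 - (n : ℝ)) * Real.log (lam n))
      Filter.atTop (nhds (-Real.log ((1 - θ₁) * (1 - θ₂)))) := by
  obtain ⟨hθ₁0, hθ₁1⟩ := hθ₁
  obtain ⟨hθ₂0, hθ₂1⟩ := hθ₂
  have hc : 0 < (1 - θ₁) * (1 - θ₂) := mul_pos (by linarith) (by linarith)
  refine tendsto_one_div_one_sub_mul_of_isBigO (isBigO_log_sub_natCast_mul_log (K := 4) hc ?_)
  filter_upwards [eventually_ge_atTop 1] with n hn
  obtain ⟨hpos, hroot⟩ := hlam n hn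
  have hlow : ((1 - θ₁) * (1 - θ₂)) ^ n ≤ lam n := by
    rw [mul_pow]
    exact mul_le_of_pow_three_eq hpos (pow_nonneg (by linarith) n) (pow_nonneg (by linarith) n)
      (pow_nonneg hθ₁0.le n) (pow_nonneg hθ₂0.le n) hroot
  refine ⟨hlow, ?_⟩
  rw [mul_pow, ← mul_assoc]
  exact le_four_mul_of_pow_three_eq hpos (pow_nonneg hθ₁0.le n) (pow_nonneg hθ₂0.le n)
    (pow_le_one_sub_pow_mul n hθ₁0.le hθ₁1 h1 hlow) (pow_le_one_sub_pow_mul n hθ₂0.le hθ₂1 h2 hlow)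
    hroot
end

section
/- Let A and à be square 0-1 matrices (of sizes 81×81 and 9×9 respectively) with Ã_{x,y} = A_{(x,x),(y,y)}, and suppose tr(Aᵏ) = tr(Ãᵏ) for all k ≥ 1. Then every closed walk (x₁,y₁) → (x₂,y₂) → ⋯ → (x_k,y_k) → (x₁,y₁) in the digraph of A has x_j = y_j for all j. -/
/-!
Let `D` be `A` with every entry outside the diagonal pairs replaced by `0`. Then `0 ≤ D ≤ A`
entrywise, hence `(Dᵏ)ₚₚ ≤ (Aᵏ)ₚₚ` for every `p`, while `tr Dᵏ = tr Ãᵏ = tr Aᵏ`; so the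
diagonals of `Dᵏ` and `Aᵏ` coincide. A closed walk of length `k` through an off-diagonal pair `p`
makes `(Aᵏ)ₚₚ > 0`, but row `p` of `D` vanishes, so `(Dᵏ)ₚₚ = 0`.
-/

namespace Matrix

variable {ι κ R : Type*}

open Classical in
noncomputable def restrictToRange [Zero R] (A : Matrix ι ι R) (f : κ → ι) : Matrix ι ι R :=
  of fun p q => if p ∈ Set.range f ∧ q ∈ Set.range f then A p q else 0

variable [Fintype ι] [DecidableEq ι]

section OrderedSemiring

variable [Semiring R] [PartialOrder R] [IsOrderedRing R]

theorem pow_apply_le_pow_apply {A B : Matrix ι ι R} (hB : ∀ i j, 0 ≤ B i j)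
    (hBA : ∀ i j, B i j ≤ A i j) (n : ℕ) (i j : ι) : (B ^ n) i j ≤ (A ^ n) i j := by
  induction n generalizing j with
  | zero => rfl
  | succ n ih =>
    simp only [pow_succ, mul_apply]
    have hA : ∀ i j, 0 ≤ A i j := fun i j => (hB i j).trans (hBA i j)
    exact Finset.sum_le_sum fun r _ =>
      mul_le_mul (ih r) (hBA r j) (hB r j) (pow_apply_nonneg hA n i r)

end OrderedSemiring

theorem prod_le_pow_apply [CommSemiring R] [PartialOrder R] [IsOrderedRing R]
    {A : Matrix ι ι R} (hA : ∀ i j, 0 ≤ A i j) (w : ℕ → ι) (n : ℕ) :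
    ∏ t ∈ Finset.range n, A (w t) (w (t + 1)) ≤ (A ^ n) (w 0) (w n) := by
  induction n with
  | zero => simp
  | succ n ih =>
    rw [Finset.prod_range_succ, pow_succ, mul_apply]
    calc _ ≤ (A ^ n) (w 0) (w n) * A (w n) (w (n + 1)) :=
          mul_le_mul_of_nonneg_right ih (hA _ _)
      _ ≤ _ := Finset.single_le_sum (f := fun r => (A ^ n) (w 0) r * A r (w (n + 1)))
          (fun r _ => mul_nonneg (pow_apply_nonneg hA n _ r) (hA r _)) (Finset.mem_univ _)

theorem pow_apply_self_pos_of_closed_walk [CommSemiring R] [PartialOrder R]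
    [IsStrictOrderedRing R] {A : Matrix ι ι R} (hA : ∀ i j, 0 ≤ A i j) {k : ℕ}
    (w : ZMod k → ι) (hw : ∀ j, 0 < A (w j) (w (j + 1))) (j : ZMod k) :
    0 < (A ^ k) (w j) (w j) := by
  have hwalk := prod_le_pow_apply hA (fun t => w (j + t)) k
  simp only [Nat.cast_zero, add_zero, ZMod.natCast_self] at hwalk
  refine lt_of_lt_of_le (Finset.prod_pos fun t _ => ?_) hwalk
  simpa [add_assoc] using hw (j + t)

section Restrict

variable [Semiring R] (A : Matrix ι ι R) {f : κ → ι}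

theorem restrictToRange_pow_apply_of_notMem {n : ℕ} (hn : n ≠ 0) {p : ι}
    (hp : p ∉ Set.range f) (q : ι) : (A.restrictToRange f ^ n) p q = 0 := by
  obtain ⟨n, rfl⟩ := Nat.exists_eq_succ_of_ne_zero hn
  rw [pow_succ', mul_apply]
  exact Finset.sum_eq_zero fun r _ => by simp [restrictToRange, hp]

variable [Fintype κ] [DecidableEq κ]

theorem submatrix_restrictToRange_pow (hf : f.Injective) (n : ℕ) :
    (A.restrictToRange f ^ n).submatrix f f = A.submatrix f f ^ n := by
  induction n with
  | zero => exact submatrix_one f hf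
  | succ n ih =>
    ext x y
    rw [pow_succ, pow_succ, submatrix_apply, mul_apply, mul_apply, ← ih]
    refine (Fintype.sum_of_injective f hf _ _ (fun r hr => ?_) fun z => ?_).symm
    · rw [show A.restrictToRange f r (f y) = 0 from if_neg fun h => hr h.1, mul_zero]
    · simp [restrictToRange]

theorem trace_restrictToRange_pow (hf : f.Injective) {n : ℕ} (hn : n ≠ 0) :
    (A.restrictToRange f ^ n).trace = (A.submatrix f f ^ n).trace := by
  rw [← submatrix_restrictToRange_pow A hf]
  exact (Fintype.sum_of_injective f hf _ _
    (fun p hp => restrictToRange_pow_apply_of_notMem A hn hp p) fun _ => rfl).symm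

end Restrict

theorem pow_apply_self_eq_zero_of_trace_pow_eq [Fintype κ] [DecidableEq κ] [Ring R]
    [PartialOrder R] [IsOrderedRing R] {A : Matrix ι ι R} (hA : ∀ i j, 0 ≤ A i j)
    {f : κ → ι} (hf : f.Injective) {n : ℕ} (hn : n ≠ 0)
    (htr : (A ^ n).trace = (A.submatrix f f ^ n).trace) {p : ι} (hp : p ∉ Set.range f) :
    (A ^ n) p p = 0 := by
  set D := A.restrictToRange f
  have hD : ∀ i j, 0 ≤ D i j := fun i j => by
    simp only [D, restrictToRange, of_apply]; split_ifs <;> simp [hA]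
  have hDA : ∀ i j, D i j ≤ A i j := fun i j => by
    simp only [D, restrictToRange, of_apply]; split_ifs <;> simp [hA]
  have htrD : (D ^ n).trace = (A ^ n).trace := by rw [htr, trace_restrictToRange_pow A hf hn]
  have hdiag : ∀ i, (D ^ n) i i = (A ^ n) i i := fun i =>
    (Finset.sum_eq_sum_iff_of_le fun i _ => pow_apply_le_pow_apply hD hDA n i i).mp htrD i
      (Finset.mem_univ i)
  rw [← hdiag, restrictToRange_pow_apply_of_notMem A hn hp]

end Matrix

/-- If a 0-1 matrix A on pairs and its diagonal restriction Ã have equal traces of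
all powers, every closed walk in the digraph of A stays on diagonal pairs. -/
theorem stmt13 (A : Matrix (Fin 9 × Fin 9) (Fin 9 × Fin 9) ℝ)
    (hA01 : ∀ i j, A i j = 0 ∨ A i j = 1)
    (Atil : Matrix (Fin 9) (Fin 9) ℝ)
    (hAtil : ∀ x y, Atil x y = A (x, x) (y, y))
    (htr : ∀ k : ℕ, 1 ≤ k → (A ^ k).trace = (Atil ^ k).trace)
    (k : ℕ) (hk : 0 < k) (w : ZMod k → Fin 9 × Fin 9)
    (hw : ∀ j : ZMod k, A (w j) (w (j + 1)) = 1) :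
    ∀ j : ZMod k, (w j).1 = (w j).2 := by
  have hA : ∀ i j, 0 ≤ A i j := fun i j => by rcases hA01 i j with h | h <;> simp [h]
  have hAtil_eq : Atil = A.submatrix Function.diag Function.diag := Matrix.ext hAtil
  intro j
  by_contra hoff
  have hpos := Matrix.pow_apply_self_pos_of_closed_walk hA w (fun j => by simp [hw j]) j
  refine hpos.ne' (Matrix.pow_apply_self_eq_zero_of_trace_pow_eq hA Function.diag_injective
    hk.ne' (hAtil_eq ▸ htr k hk) ?_)
  rintro ⟨x, hx⟩
  exact hoff (by rw [← hx]; rfl)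
end

section
/- For θ₁, θ₂ ∈ (0,1) and integer n ≥ 1, the quantity λₙ(θ₁,θ₂) given by the Cardano formula λₙ = (1-θ₁)ⁿ(1-θ₂)ⁿ/3 + (Δ₁+√(Δ₁²-Δ₂³))^{1/3} + Δ₂/(Δ₁+√(Δ₁²-Δ₂³))^{1/3}, with Δ₁ = (1/6)(1-θ₁)^{2n}(1-θ₂)^{2n}[(θ₁/(1-θ₁))ⁿ + (θ₂/(1-θ₂))ⁿ] + (1/2)θ₁ⁿθ₂ⁿ + (1/27)(1-θ₁)^{3n}(1-θ₂)^{3n} and Δ₂ = (1/3)θ₁ⁿ(1-θ₂)ⁿ + (1/3)θ₂ⁿ(1-θ₁)ⁿ + (1/9)(1-θ₁)^{2n}(1-θ₂)^{2n}, is a root of the cubic λ³ = ((1-θ₁)ⁿλ + θ₁ⁿ)((1-θ₂)ⁿλ + θ₂ⁿ). -/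
/-!
Writing `a = (1-θ₁)ⁿ(1-θ₂)ⁿ`, `b = θ₁ⁿ(1-θ₂)ⁿ + θ₂ⁿ(1-θ₁)ⁿ`, `c = θ₁ⁿθ₂ⁿ`, the cubic is
`λ³ = aλ² + bλ + c`, and `Δ₁ = ab/6 + c/2 + a³/27`, `Δ₂ = b/3 + a²/9`. The shift `λ = a/3 + t`
turns it into the depressed cubic `t³ = 3Δ₂t + 2Δ₁`, which Cardano's `t = C + Δ₂/C` solves as soon
as `C³ = Δ₁ + s` with `s² = Δ₁² - Δ₂³`: then `(Δ₂/C)³ = Δ₁ - s`. Positivity of `Δ₂` rules out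
`C = 0`.
-/

section Cardano

variable {K : Type*} [Field K]

theorem add_ne_zero_of_sq_eq_sq_sub_pow_three {Δ₁ Δ₂ s : K} (hΔ₂ : Δ₂ ≠ 0)
    (hs : s ^ 2 = Δ₁ ^ 2 - Δ₂ ^ 3) : Δ₁ + s ≠ 0 := by
  intro h
  have hs' : s = -Δ₁ := by linear_combination h
  subst hs'
  exact pow_ne_zero 3 hΔ₂ (by linear_combination hs)

theorem cardano_depressed_cubic {Δ₁ Δ₂ s C : K} (hC : C ≠ 0)
    (hs : s ^ 2 = Δ₁ ^ 2 - Δ₂ ^ 3) (hC3 : C ^ 3 = Δ₁ + s) :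
    (C + Δ₂ / C) ^ 3 = 3 * Δ₂ * (C + Δ₂ / C) + 2 * Δ₁ := by
  have hconj : (Δ₂ / C) ^ 3 = Δ₁ - s := by
    rw [div_pow, div_eq_iff (pow_ne_zero 3 hC), hC3]
    linear_combination hs
  have hprod : C * (Δ₂ / C) = Δ₂ := mul_div_cancel₀ Δ₂ hC
  linear_combination hC3 + hconj + 3 * (C + Δ₂ / C) * hprod

theorem root_of_depressed_cubic_shift [CharZero K] {a b c t : K}
    (ht : t ^ 3 = 3 * (b / 3 + a ^ 2 / 9) * t + 2 * (a * b / 6 + c / 2 + a ^ 3 / 27)) :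
    (a / 3 + t) ^ 3 = a * (a / 3 + t) ^ 2 + b * (a / 3 + t) + c := by
  linear_combination ht

end Cardano

theorem Complex.cardano_cubic_root {Δ₁ Δ₂ s : ℂ} (hΔ₂ : Δ₂ ≠ 0)
    (hs : s ^ 2 = Δ₁ ^ 2 - Δ₂ ^ 3) :
    ((Δ₁ + s) ^ ((1 : ℂ) / 3) + Δ₂ / (Δ₁ + s) ^ ((1 : ℂ) / 3)) ^ 3 =
      3 * Δ₂ * ((Δ₁ + s) ^ ((1 : ℂ) / 3) + Δ₂ / (Δ₁ + s) ^ ((1 : ℂ) / 3)) + 2 * Δ₁ := by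
  have hcube : ((Δ₁ + s) ^ ((1 : ℂ) / 3)) ^ 3 = Δ₁ + s := by
    rw [one_div, ← Nat.cast_ofNat, Complex.cpow_nat_inv_pow _ three_ne_zero]
  have hne := add_ne_zero_of_sq_eq_sq_sub_pow_three hΔ₂ hs
  refine cardano_depressed_cubic (fun h0 => hne ?_) hs hcube
  rw [← hcube, h0, zero_pow three_ne_zero]

theorem stmt17_general (θ₁ θ₂ : ℝ) (hθ₁ : θ₁ ∈ Set.Ioo (0:ℝ) 1) (hθ₂ : θ₂ ∈ Set.Ioo (0:ℝ) 1)
    (n : ℕ)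
    (Δ₁ Δ₂ : ℝ)
    (hΔ₁ : Δ₁ = 1/6 * (1 - θ₁) ^ (2*n) * (1 - θ₂) ^ (2*n) *
        ((θ₁ / (1 - θ₁)) ^ n + (θ₂ / (1 - θ₂)) ^ n)
      + 1/2 * θ₁ ^ n * θ₂ ^ n + 1/27 * (1 - θ₁) ^ (3*n) * (1 - θ₂) ^ (3*n))
    (hΔ₂ : Δ₂ = 1/3 * θ₁ ^ n * (1 - θ₂) ^ n + 1/3 * θ₂ ^ n * (1 - θ₁) ^ n
      + 1/9 * (1 - θ₁) ^ (2*n) * (1 - θ₂) ^ (2*n))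
    (s C lam : ℂ)
    (hs : s ^ 2 = (Δ₁ : ℂ) ^ 2 - (Δ₂ : ℂ) ^ 3)
    (hC : C = ((Δ₁ : ℂ) + s) ^ ((1 : ℂ)/3))
    (hlam : lam = (((1 - θ₁) ^ n * (1 - θ₂) ^ n / 3 : ℝ) : ℂ) + C + (Δ₂ : ℂ) / C) :
    lam ^ 3 = ((((1 - θ₁) ^ n : ℝ) : ℂ) * lam + ((θ₁ ^ n : ℝ) : ℂ)) *
      ((((1 - θ₂) ^ n : ℝ) : ℂ) * lam + ((θ₂ ^ n : ℝ) : ℂ)) := by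
  obtain ⟨h₁, h₁'⟩ := hθ₁
  obtain ⟨h₂, h₂'⟩ := hθ₂
  have e₁ : 0 < 1 - θ₁ := sub_pos.mpr h₁'
  have e₂ : 0 < 1 - θ₂ := sub_pos.mpr h₂'
  set p := (1 - θ₁) ^ n
  set r := (1 - θ₂) ^ n
  set q := θ₁ ^ n
  set u := θ₂ ^ n
  have hΔ₁' : Δ₁ = p * r * (p * u + q * r) / 6 + q * u / 2 + (p * r) ^ 3 / 27 := by
    rw [hΔ₁, mul_comm 2, mul_comm 3, pow_mul, pow_mul, pow_mul, pow_mul, div_pow, div_pow]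
    field_simp
    ring
  have hΔ₂' : Δ₂ = (p * u + q * r) / 3 + (p * r) ^ 2 / 9 := by
    rw [hΔ₂, mul_comm 2, pow_mul, pow_mul]
    ring
  have hΔ₂pos : 0 < Δ₂ := by rw [hΔ₂']; positivity
  have ht := Complex.cardano_cubic_root (Complex.ofReal_ne_zero.mpr hΔ₂pos.ne') hs
  rw [← hC, hΔ₁', hΔ₂'] at ht
  rw [hlam, add_assoc, hΔ₂']
  push_cast at ht ⊢
  linear_combination root_of_depressed_cubic_shift ht

/-- The Cardano formula λₙ = (1-θ₁)ⁿ(1-θ₂)ⁿ/3 + C + Δ₂/C, with C a cube root of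
Δ₁ + √(Δ₁² - Δ₂³), gives a root of the cubic λ³ = ((1-θ₁)ⁿλ+θ₁ⁿ)((1-θ₂)ⁿλ+θ₂ⁿ). -/
theorem stmt17 (θ₁ θ₂ : ℝ) (hθ₁ : θ₁ ∈ Set.Ioo (0:ℝ) 1) (hθ₂ : θ₂ ∈ Set.Ioo (0:ℝ) 1)
    (n : ℕ) (hn : 1 ≤ n)
    (Δ₁ Δ₂ : ℝ)
    (hΔ₁ : Δ₁ = 1/6 * (1 - θ₁) ^ (2*n) * (1 - θ₂) ^ (2*n) *
        ((θ₁ / (1 - θ₁)) ^ n + (θ₂ / (1 - θ₂)) ^ n)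
      + 1/2 * θ₁ ^ n * θ₂ ^ n + 1/27 * (1 - θ₁) ^ (3*n) * (1 - θ₂) ^ (3*n))
    (hΔ₂ : Δ₂ = 1/3 * θ₁ ^ n * (1 - θ₂) ^ n + 1/3 * θ₂ ^ n * (1 - θ₁) ^ n
      + 1/9 * (1 - θ₁) ^ (2*n) * (1 - θ₂) ^ (2*n))
    (s C lam : ℂ)
    (hs : s ^ 2 = (Δ₁ : ℂ) ^ 2 - (Δ₂ : ℂ) ^ 3)
    (hC : C = ((Δ₁ : ℂ) + s) ^ ((1 : ℂ)/3))
    (hlam : lam = (((1 - θ₁) ^ n * (1 - θ₂) ^ n / 3 : ℝ) : ℂ) + C + (Δ₂ : ℂ) / C) :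
    lam ^ 3 = ((((1 - θ₁) ^ n : ℝ) : ℂ) * lam + ((θ₁ ^ n : ℝ) : ℂ)) *
      ((((1 - θ₂) ^ n : ℝ) : ℂ) * lam + ((θ₂ ^ n : ℝ) : ℂ)) :=
  stmt17_general θ₁ θ₂ hθ₁ hθ₂ n Δ₁ Δ₂ hΔ₁ hΔ₂ s C lam hs hC hlam
end
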